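/- In a strongly connected balanced digraph G, the resistance r_{ij} := l†_{ii} + l†_{jj} − 2 l†_{ij} satisfies r_{ij} ≥ 0 for all vertices i, j, and the triangle inequality r_{ij} ≤ r_{ik} + r_{kj} for all vertices i, j, k. -/

import Mathlib

open Matrix Finset

/-- Out-degree of vertex `i` in the digraph with adjacency `A`. -/
def outdeg {n : ℕ} (A : Fin n → Fin n → Bool) (i : Fin n) : ℕ :=
  (Finset.univ.filter (fun j => A i j = true)).card

/-- In-degree of vertex `i`. -/
def indeg {n : ℕ} (A : Fin n → Fin n → Bool) (i : Fin n) : ℕ :=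
  (Finset.univ.filter (fun j => A j i = true)).card

/-- Laplacian matrix of a digraph: diagonal = out-degree, `-1` on edges, `0` otherwise. -/
def lap {n : ℕ} (A : Fin n → Fin n → Bool) : Matrix (Fin n) (Fin n) ℝ :=
  Matrix.of fun i j => if i = j then (outdeg A i : ℝ) else if A i j then -1 else 0

/-- Reachability by directed edges. -/
def Reach {n : ℕ} (A : Fin n → Fin n → Bool) : Fin n → Fin n → Prop :=
  Relation.ReflTransGen (fun a b => A a b = true)

def StronglyConnected {n : ℕ} (A : Fin n → Fin n → Bool) : Prop := ∀ i j, Reach A i j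

def IsBalanced {n : ℕ} (A : Fin n → Fin n → Bool) : Prop := ∀ i, indeg A i = outdeg A i

/-- In-degree of `v` in an edge set `T`. -/
def tIndeg {n : ℕ} (T : Finset (Fin n × Fin n)) (v : Fin n) : ℕ :=
  (T.filter (fun e => e.2 = v)).card

/-- Reachability using only the edges of `T`. -/
def ReachIn {n : ℕ} (T : Finset (Fin n × Fin n)) : Fin n → Fin n → Prop :=
  Relation.ReflTransGen (fun a b => (a, b) ∈ T)

/-- Spanning tree of the digraph rooted at `i` (spanning arborescence, edges directed
away from `i`): every vertex other than `i` has in-degree 1, `i` has in-degree 0, and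
every vertex is reachable from `i` (i.e. the subgraph is connected and acyclic). -/
def IsSpanningTree {n : ℕ} (A : Fin n → Fin n → Bool) (i : Fin n)
    (T : Finset (Fin n × Fin n)) : Prop :=
  (∀ e ∈ T, A e.1 e.2 = true) ∧ tIndeg T i = 0 ∧
    (∀ v, v ≠ i → tIndeg T v = 1) ∧ (∀ v, ReachIn T i v)

/-- Spanning forest with exactly two trees, rooted at `i` and `j`: two vertex-disjoint
arborescences partitioning the vertex set, with roots `i` and `j`. -/
def IsTwoForest {n : ℕ} (A : Fin n → Fin n → Bool) (i j : Fin n)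
    (T : Finset (Fin n × Fin n)) : Prop :=
  (∀ e ∈ T, A e.1 e.2 = true) ∧ tIndeg T i = 0 ∧ tIndeg T j = 0 ∧
    (∀ v, v ≠ i → v ≠ j → tIndeg T v = 1) ∧ (∀ v, ReachIn T i v ∨ ReachIn T j v)

/-- `det L[{i}ᶜ, {i}ᶜ]`: determinant of the principal submatrix deleting row/column `i`. -/
def minor1 {n : ℕ} (L : Matrix (Fin n) (Fin n) ℝ) (i : Fin n) : ℝ :=
  (L.submatrix (fun a : {x : Fin n // x ≠ i} => (a : Fin n))
    (fun a : {x : Fin n // x ≠ i} => (a : Fin n))).det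

/-- `det L[{i,j}ᶜ, {i,j}ᶜ]`: determinant of the principal submatrix deleting rows and
columns `i` and `j`. -/
def minor2 {n : ℕ} (L : Matrix (Fin n) (Fin n) ℝ) (i j : Fin n) : ℝ :=
  (L.submatrix (fun a : {x : Fin n // x ≠ i ∧ x ≠ j} => (a : Fin n))
    (fun a : {x : Fin n // x ≠ i ∧ x ≠ j} => (a : Fin n))).det

/-- `M` is the Moore–Penrose inverse of `L` (the four Penrose equations). -/
def IsMoorePenrose {n : ℕ} (L M : Matrix (Fin n) (Fin n) ℝ) : Prop :=
  L * M * L = L ∧ M * L * M = M ∧ (L * M)ᵀ = L * M ∧ (M * L)ᵀ = M * L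

/-- Resistance `r_{ij} = l†_{ii} + l†_{jj} - 2 l†_{ij}` computed from `M = L†`. -/
def resist {n : ℕ} (M : Matrix (Fin n) (Fin n) ℝ) (i j : Fin n) : ℝ :=
  M i i + M j j - 2 * M i j

/-- Directed path from `i` to `j`: a list of distinct vertices starting at `i`, ending at
`j`, consecutive ones joined by directed edges. -/
def IsPath {n : ℕ} (A : Fin n → Fin n → Bool) (i j : Fin n) (p : List (Fin n)) : Prop :=
  p.Chain' (fun a b => A a b = true) ∧ p.head? = some i ∧ p.getLast? = some j ∧ p.Nodup

/-- `s` is the edge set of a directed cycle of the digraph: the cyclically consecutive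
pairs of a nonempty duplicate-free vertex list, all being directed edges. -/
def IsCycle {n : ℕ} (A : Fin n → Fin n → Bool) (s : Finset (Fin n × Fin n)) : Prop :=
  ∃ c : List (Fin n), 2 ≤ c.length ∧ c.Nodup ∧
    (∀ p ∈ c.zip (c.rotate 1), A p.1 p.2 = true) ∧ s = (c.zip (c.rotate 1)).toFinset

/-- Vertex set of a cycle given by its edge set. -/
def cycVerts {n : ℕ} (s : Finset (Fin n × Fin n)) : Finset (Fin n) := s.image Prod.fst

/-- Directed cactus: strongly connected and every directed edge lies in exactly one
directed cycle. -/
def IsCactus {n : ℕ} (A : Fin n → Fin n → Bool) : Prop :=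
  StronglyConnected A ∧
    ∀ i j : Fin n, A i j = true → ∃! s : Finset (Fin n × Fin n), IsCycle A s ∧ (i, j) ∈ s

/-- Classical distance: length (number of edges) of a shortest directed path. -/
noncomputable def pdist {n : ℕ} (A : Fin n → Fin n → Bool) (i j : Fin n) : ℕ :=
  sInf {m : ℕ | ∃ p : List (Fin n), IsPath A i j p ∧ p.length = m + 1}


/-! Both `M * L` and `L * M` are the projection `x ↦ x - average x`, because the kernels of `L`
and `Lᵀ` are the constants. So `w = M *ᵥ x` solves `L *ᵥ w = x - average x`, and the maximum
principle for the Laplacian of a strongly connected digraph puts the maximum of `w` at `k` as soon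
as `x ≤ average x` off `k`. Taking `x = e_j` gives `M i j ≤ M j j`, taking
`x = e_k - e_j` gives the triangle inequality; balancedness makes `Lᵀ` a Laplacian as well, which
yields `M i j ≤ M i i` from the columns of `Mᵀ`. -/

section MaxPrinciple

variable {ι : Type*} [Fintype ι]

def HasMaxPrinciple (L : Matrix ι ι ℝ) : Prop :=
  ∀ (w : ι → ℝ) (k : ι), (∀ v, v ≠ k → (L *ᵥ w) v ≤ 0) → ∀ u, w u ≤ w k

theorem HasMaxPrinciple.eq_of_mulVec_eq_zero {L : Matrix ι ι ℝ} (hL : HasMaxPrinciple L)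
    {w : ι → ℝ} (hw : L *ᵥ w = 0) (u v : ι) : w u = w v :=
  le_antisymm (hL w v (fun x _ => by simp [hw]) u) (hL w u (fun x _ => by simp [hw]) v)

end MaxPrinciple

namespace IsMoorePenrose

variable {n : ℕ} {L M : Matrix (Fin n) (Fin n) ℝ}

theorem transpose (hM : IsMoorePenrose L M) : IsMoorePenrose Lᵀ Mᵀ := by
  obtain ⟨h1, h2, h3, h4⟩ := hM
  refine ⟨?_, ?_, ?_, ?_⟩
  · rw [← transpose_mul, ← transpose_mul, ← Matrix.mul_assoc, h1]
  · rw [← transpose_mul, ← transpose_mul, ← Matrix.mul_assoc, h2]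
  · rw [← transpose_mul, h4, h4]
  · rw [← transpose_mul, h3, h3]

/-- Since `L * M * L = L`, the vector `x - (M * L) *ᵥ x` lies in `ker L`, and `M * L` kills the
constants because it is symmetric and `L *ᵥ 1 = 0`. -/
theorem pinv_mul_mulVec_apply (hM : IsMoorePenrose L M)
    (hker : ∀ w, L *ᵥ w = 0 → ∀ u v, w u = w v) (hone : L *ᵥ 1 = 0) (x : Fin n → ℝ)
    (v : Fin n) : ((M * L) *ᵥ x) v = x v - (∑ u, x u) / n := by
  obtain ⟨hLML, -, -, hML⟩ := hM
  set y := x - (M * L) *ᵥ x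
  have hy : ∀ u, y u = y v := fun u ↦
    hker y (by rw [mulVec_sub, mulVec_mulVec, ← Matrix.mul_assoc, hLML, sub_self]) u v
  have hsum : ∑ u, ((M * L) *ᵥ x) u = 0 := by
    rw [← dotProduct_one, dotProduct_comm, dotProduct_mulVec, ← mulVec_transpose, hML,
      ← mulVec_mulVec, hone, mulVec_zero, zero_dotProduct]
  have hn : (n : ℝ) ≠ 0 := by exact_mod_cast (Fin.pos v).ne'
  have : ∑ u, x u = n * y v := by
    calc ∑ u, x u = ∑ u, y u := by simp [y, Finset.sum_sub_distrib, hsum]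
      _ = n * y v := by simp [hy]
  rw [this, mul_div_cancel_left₀ _ hn]
  simp [y]

theorem mul_pinv_mulVec_apply (hM : IsMoorePenrose L M)
    (hker : ∀ w, Lᵀ *ᵥ w = 0 → ∀ u v, w u = w v) (hone : Lᵀ *ᵥ 1 = 0) (x : Fin n → ℝ)
    (v : Fin n) : ((L * M) *ᵥ x) v = x v - (∑ u, x u) / n := by
  rw [← hM.2.2.1, transpose_mul]
  exact hM.transpose.pinv_mul_mulVec_apply hker hone x v

/-- `L * (M *ᵥ x) = x - average x`, which is nonpositive off `k`. -/
theorem mulVec_le_of_le_average (hM : IsMoorePenrose L M) (hL : HasMaxPrinciple L)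
    (hker : ∀ w, Lᵀ *ᵥ w = 0 → ∀ u v, w u = w v) (hone : Lᵀ *ᵥ 1 = 0) {x : Fin n → ℝ}
    {k : Fin n} (hx : ∀ v, v ≠ k → x v ≤ (∑ u, x u) / n) (u : Fin n) :
    (M *ᵥ x) u ≤ (M *ᵥ x) k :=
  hL _ k (fun v hv => by
    rw [mulVec_mulVec, hM.mul_pinv_mulVec_apply hker hone]
    linarith [hx v hv]) u

theorem le_diag (hM : IsMoorePenrose L M) (hL : HasMaxPrinciple L)
    (hker : ∀ w, Lᵀ *ᵥ w = 0 → ∀ u v, w u = w v) (hone : Lᵀ *ᵥ 1 = 0) (i j : Fin n) :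
    M i j ≤ M j j := by
  have hx : ∀ v, v ≠ j → (Pi.single j 1 : Fin n → ℝ) v ≤ (∑ u, Pi.single j (1 : ℝ) u) / n :=
    fun v hv => by simp [hv]
  simpa [mulVec_single_one] using hM.mulVec_le_of_le_average hL hker hone hx i

theorem add_le_add_diag (hM : IsMoorePenrose L M) (hL : HasMaxPrinciple L)
    (hker : ∀ w, Lᵀ *ᵥ w = 0 → ∀ u v, w u = w v) (hone : Lᵀ *ᵥ 1 = 0) (i j k : Fin n) :
    M i k + M k j ≤ M i j + M k k := by
  set x : Fin n → ℝ := Pi.single k 1 - Pi.single j 1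
  have hx : ∀ v, v ≠ k → x v ≤ (∑ u, x u) / n := fun v hv => by
    have hsum : ∑ u, x u = 0 := by simp [x, Finset.sum_sub_distrib]
    rw [hsum, zero_div]
    rcases eq_or_ne v j with rfl | hvj <;> simp [x, Pi.single_eq_of_ne, *]
  have := hM.mulVec_le_of_le_average hL hker hone hx i
  simp only [x, mulVec_sub, mulVec_single_one, Pi.sub_apply, col_apply] at this
  linarith

theorem resist_nonneg (hM : IsMoorePenrose L M) (hL : HasMaxPrinciple L)
    (hLT : HasMaxPrinciple Lᵀ) (hone : L *ᵥ 1 = 0) (hone_tr : Lᵀ *ᵥ 1 = 0) (i j : Fin n) :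
    0 ≤ resist M i j := by
  have hcol := hM.le_diag hL (fun _ => hLT.eq_of_mulVec_eq_zero) hone_tr i j
  have hrow := hM.transpose.le_diag hLT
    (fun _ hw => hL.eq_of_mulVec_eq_zero (by rwa [transpose_transpose] at hw))
    (by rwa [transpose_transpose]) j i
  rw [transpose_apply, transpose_apply] at hrow
  unfold resist
  linarith

theorem resist_le_add (hM : IsMoorePenrose L M) (hL : HasMaxPrinciple L)
    (hLT : HasMaxPrinciple Lᵀ) (hone : Lᵀ *ᵥ 1 = 0) (i j k : Fin n) :
    resist M i j ≤ resist M i k + resist M k j := by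
  have := hM.add_le_add_diag hL (fun _ => hLT.eq_of_mulVec_eq_zero) hone i j k
  unfold resist
  linarith

end IsMoorePenrose

section Laplacian

variable {n : ℕ} {A : Fin n → Fin n → Bool}

theorem lap_mulVec_apply (hA : ∀ i, A i i = false) (w : Fin n → ℝ) (v : Fin n) :
    (lap A *ᵥ w) v = ∑ u ∈ Finset.univ.filter (fun u => A v u = true), (w v - w u) := by
  have hentry : ∀ u, lap A v u * w u
      = (if v = u then (outdeg A v : ℝ) * w v else 0) - (if A v u = true then w u else 0) := by
    intro u
    by_cases hvu : v = u
    · subst hvu; simp [lap, hA]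
    · by_cases hedge : A v u <;> simp [lap, hvu, hedge]
  rw [mulVec, dotProduct, Finset.sum_congr rfl fun u _ => hentry u, Finset.sum_sub_distrib,
    Finset.sum_ite_eq, Finset.sum_sub_distrib, Finset.sum_const, ← Finset.sum_filter, outdeg,
    nsmul_eq_mul]
  simp

theorem lap_mulVec_one (hA : ∀ i, A i i = false) : lap A *ᵥ 1 = 0 := by
  ext v
  simp [lap_mulVec_apply hA]

theorem lap_transpose (hbal : IsBalanced A) : (lap A)ᵀ = lap (fun i j => A j i) := by
  ext i j
  by_cases hij : i = j
  · subst hij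
    simpa [lap, indeg, outdeg] using (hbal i).symm
  · simp [lap, hij, Ne.symm hij]

theorem StronglyConnected.swap (hsc : StronglyConnected A) :
    StronglyConnected (fun i j => A j i) :=
  fun i j => Relation.reflTransGen_swap.mpr (hsc j i)

/-- All terms `w a - w u` of `(lap A *ᵥ w) a` are nonnegative at a maximum `a`, so they vanish
when their sum is nonpositive. -/
theorem eq_of_lap_mulVec_nonpos_of_isMax (hA : ∀ i, A i i = false) {w : Fin n → ℝ} {a c : Fin n}
    (hmax : ∀ u, w u ≤ w a) (ha : (lap A *ᵥ w) a ≤ 0) (hac : A a c = true) : w c = w a := by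
  rw [lap_mulVec_apply hA] at ha
  have hnonneg : ∀ u ∈ Finset.univ.filter (fun u => A a u = true), 0 ≤ w a - w u :=
    fun u _ => sub_nonneg.2 (hmax u)
  have := (Finset.sum_eq_zero_iff_of_nonneg hnonneg).1
    (le_antisymm ha (Finset.sum_nonneg hnonneg)) c (by simpa using hac)
  linarith

/-- A maximum of `w` spreads along the edges out of vertices other than `k`; following a path
from the maximum to `k` carries it to `k`. -/
theorem hasMaxPrinciple_lap (hA : ∀ i, A i i = false) (hsc : StronglyConnected A) :
    HasMaxPrinciple (lap A) := by
  intro w k hw u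
  have : Nonempty (Fin n) := ⟨u⟩
  obtain ⟨m, hm⟩ := Finite.exists_max w
  have hspread : ∀ a, Reach A a k → w a = w m → w k = w m := by
    intro a hreach
    induction hreach using Relation.ReflTransGen.head_induction_on with
    | refl => exact id
    | @head a c hac _ ih =>
      intro ha
      by_cases hak : a = k
      · rwa [← hak]
      · exact ih ((eq_of_lap_mulVec_nonpos_of_isMax hA (ha ▸ hm) (hw a hak) hac).trans ha)
  linarith [hm u, hspread m (hsc m k) rfl]

end Laplacian

/-- in a strongly connected balanced digraph the resistance is nonnegative
and satisfies the triangle inequality. -/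
theorem stmt_7 {n : ℕ} (A : Fin n → Fin n → Bool) (hA : ∀ i, A i i = false)
    (hsc : StronglyConnected A) (hbal : IsBalanced A)
    (M : Matrix (Fin n) (Fin n) ℝ) (hM : IsMoorePenrose (lap A) M) :
    (∀ i j : Fin n, 0 ≤ resist M i j) ∧
    (∀ i j k : Fin n, resist M i j ≤ resist M i k + resist M k j) := by
  have hL := hasMaxPrinciple_lap hA hsc
  have hLT : HasMaxPrinciple (lap A)ᵀ := lap_transpose hbal ▸ hasMaxPrinciple_lap hA hsc.swap
  have hone_tr : (lap A)ᵀ *ᵥ 1 = 0 := lap_transpose hbal ▸ lap_mulVec_one hA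
  exact ⟨hM.resist_nonneg hL hLT (lap_mulVec_one hA) hone_tr, hM.resist_le_add hL hLT hone_tr⟩
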